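/- The set of matrices K such that Σ_f - P (G_0 Σ_0 G_0ᵀ + (G_w + G_u K) W (G_w + G_u K)ᵀ) Pᵀ is positive semidefinite is a convex set. -/

import Mathlib

open Matrix

private lemma psd_smul {N : ℕ} {c : ℝ} (hc : 0 ≤ c) {M : Matrix (Fin N) (Fin N) ℝ}
    (h : M.PosSemidef) : (c • M).PosSemidef := by
  constructor
  · show (c • M)ᴴ = c • M
    rw [Matrix.conjTranspose_smul, h.1.eq, star_trivial]
  · intro x
    have := h.2 x
    exact (h.smul hc).2 x

theorem stmt_8 {n m p q : ℕ}
    (Sf : Matrix (Fin q) (Fin q) ℝ) (P : Matrix (Fin q) (Fin n) ℝ)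
    (G0 : Matrix (Fin n) (Fin n) ℝ) (Gu : Matrix (Fin n) (Fin m) ℝ)
    (Gw : Matrix (Fin n) (Fin p) ℝ)
    (S0 : Matrix (Fin n) (Fin n) ℝ) (W : Matrix (Fin p) (Fin p) ℝ)
    (hSf : Sf.PosDef) (hS0 : S0.PosSemidef) (hW : W.PosSemidef) :
    Convex ℝ {K : Matrix (Fin m) (Fin p) ℝ |
      (Sf - P * (G0 * S0 * G0ᵀ + (Gw + Gu * K) * W * (Gw + Gu * K)ᵀ) * Pᵀ).PosSemidef} := by
  intro K1 hK1 K2 hK2 a b ha hb hab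
  simp only [Set.mem_setOf_eq] at *
  set M1 := Gw + Gu * K1 with hM1
  set M2 := Gw + Gu * K2 with hM2
  have key : Sf - P * (G0 * S0 * G0ᵀ + (Gw + Gu * (a • K1 + b • K2)) * W *
        (Gw + Gu * (a • K1 + b • K2))ᵀ) * Pᵀ
      = a • (Sf - P * (G0 * S0 * G0ᵀ + M1 * W * M1ᵀ) * Pᵀ)
        + b • (Sf - P * (G0 * S0 * G0ᵀ + M2 * W * M2ᵀ) * Pᵀ)
        + (a * b) • (P * ((M1 - M2) * W * (M1 - M2)ᵀ) * Pᵀ) := by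
    have hGw : Gw + Gu * (a • K1 + b • K2) = a • M1 + b • M2 := by
      rw [hM1, hM2]
      have : Gw = a • Gw + b • Gw := by rw [← add_smul, hab, one_smul]
      rw [Matrix.mul_add, Matrix.mul_smul, Matrix.mul_smul, smul_add, smul_add]
      conv_lhs => rw [this]
      abel
    rw [hGw]
    have hb' : b = 1 - a := by linarith
    subst hb'
    simp only [Matrix.transpose_add, Matrix.transpose_smul, Matrix.transpose_sub,
      Matrix.add_mul, Matrix.mul_add, Matrix.sub_mul, Matrix.mul_sub,
      Matrix.smul_mul, Matrix.mul_smul, smul_add, smul_sub, smul_smul]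
    module
  rw [key]
  have h3 : (P * ((M1 - M2) * W * (M1 - M2)ᵀ) * Pᵀ).PosSemidef := by
    have := (hW.mul_mul_conjTranspose_same (M1 - M2)).mul_mul_conjTranspose_same P
    simpa [Matrix.conjTranspose_eq_transpose_of_trivial, Matrix.mul_assoc] using this
  exact ((psd_smul ha hK1).add (psd_smul hb hK2)).add (psd_smul (mul_nonneg ha hb) h3)
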